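/- Suppose that λ ≥ ℵ₂ is a regular cardinal and S ⊆ λ is stationary, and that OSR(S) holds. Then for every matrix ⟨S_{α,i} : α < λ, i < j_α⟩ of stationary subsets of S, where j_α < λ for all α < λ, there is an ordinal γ < λ of uncountable cofinality such that S_{α,i} ∩ γ is stationary in γ for all α < γ and all i < j_α. -/

import Mathlib

/-- `α` is a limit point of the set of ordinals `C`:
`α > 0` and `C ∩ α` is unbounded in `α`. -/
def IsLimitPointOf (C : Set Ordinal.{0}) (α : Ordinal.{0}) : Prop :=
  0 < α ∧ ∀ β < α, ∃ γ ∈ C, β < γ ∧ γ < α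

/-- `C` is a club (closed and unbounded) subset of the ordinal `δ`. -/
def IsClubIn (C : Set Ordinal.{0}) (δ : Ordinal.{0}) : Prop :=
  C ⊆ Set.Iio δ ∧ (∀ β < δ, ∃ γ ∈ C, β < γ) ∧ ∀ α < δ, IsLimitPointOf C α → α ∈ C

/-- `S` is stationary in `δ`: `S` meets every club subset of `δ`. -/
def IsStationaryIn (S : Set Ordinal.{0}) (δ : Ordinal.{0}) : Prop :=
  ∀ C, IsClubIn C δ → (S ∩ C).Nonempty

/-- `OSR(S)`: for every `λ`-sequence of stationary subsets of `S` there is a `δ < λ` of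
uncountable cofinality at which all `S α` with `α < δ` reflect. -/
def OSR (lam : Cardinal.{0}) (S : Set Ordinal.{0}) : Prop :=
  ∀ T : Ordinal.{0} → Set Ordinal.{0},
    (∀ α < lam.ord, T α ⊆ S ∧ IsStationaryIn (T α) lam.ord) →
    ∃ δ < lam.ord, Cardinal.aleph0 < δ.cof ∧
      ∀ α < δ, IsStationaryIn (T α ∩ Set.Iio δ) δ

/-!
Code the matrix as a single `λ`-sequence through a pairing `λ × λ ≃ λ`, padding unused codes
with `S` itself. Since rows have fewer than `λ` entries and `λ` is regular, the ordinals `γ`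
such that every entry of a row `α < γ` has its code below `γ` form a club. `OSR` can be applied
so that the reflection point `γ` lies in this club; then each `S_{α,i}` with `α < γ` occurs in
the sequence below `γ`, and so reflects at `γ`.
-/

open Cardinal Ordinal Set

theorem IsLimitPointOf.mono {A B : Set Ordinal.{0}} {α : Ordinal.{0}} (h : A ⊆ B)
    (hA : IsLimitPointOf A α) : IsLimitPointOf B α :=
  ⟨hA.1, fun β hβ => (hA.2 β hβ).imp fun _ hγ => ⟨h hγ.1, hγ.2⟩⟩

theorem IsStationaryIn.mono {A B : Set Ordinal.{0}} {δ : Ordinal.{0}} (hA : IsStationaryIn A δ)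
    (h : A ⊆ B) : IsStationaryIn B δ :=
  fun C hC => (hA C hC).mono (inter_subset_inter_left _ h)

theorem isClubIn_Ioo {a δ : Ordinal.{0}} (hδ : Order.IsSuccLimit δ) (ha : a < δ) :
    IsClubIn (Ioo a δ) δ := by
  refine ⟨fun _ hx => hx.2, fun β hβ => ⟨max β a + 1, ⟨?_, hδ.add_one_lt (max_lt hβ ha)⟩, ?_⟩,
    fun α hα hlim => ?_⟩
  · exact (le_max_right β a).trans_lt (lt_add_one _)
  · exact (le_max_left β a).trans_lt (lt_add_one _)
  · obtain ⟨γ, hγ, -, hγα⟩ := hlim.2 0 hlim.1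
    exact ⟨hγ.1.trans hγα, hα⟩

theorem IsStationaryIn.isLimitPointOf {A : Set Ordinal.{0}} {δ : Ordinal.{0}}
    (hδ : Order.IsSuccLimit δ) (hA : IsStationaryIn A δ) : IsLimitPointOf A δ :=
  ⟨hδ.bot_lt, fun _ hβ => hA _ (isClubIn_Ioo hδ hβ)⟩

/-- Interleave the choice functions of `C` and `D` `ω` times; the supremum lies in both. -/
theorem IsClubIn.inter {C D : Set Ordinal.{0}} {δ : Ordinal.{0}} (hδ : ℵ₀ < δ.cof)
    (hC : IsClubIn C δ) (hD : IsClubIn D δ) : IsClubIn (C ∩ D) δ := by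
  refine ⟨fun _ hx => hC.1 hx.1, fun β hβ => ?_, fun α hα hlim =>
    ⟨hC.2.2 α hα (hlim.mono inter_subset_left), hD.2.2 α hα (hlim.mono inter_subset_right)⟩⟩
  choose! c hcC hc using hC.2.1
  choose! d hdD hd using hD.2.1
  have hcδ : ∀ x < δ, c x < δ := fun x hx => hC.1 (hcC x hx)
  have hdδ : ∀ x < δ, d x < δ := fun x hx => hD.1 (hdD x hx)
  set x : ℕ → Ordinal.{0} := fun n => (c ∘ d)^[n] β
  have hξδ : nfp (c ∘ d) β < δ := nfp_lt_ord hδ (fun y hy => hcδ _ (hdδ y hy)) hβ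
  have hxδ : ∀ n, x n < δ := fun n => (iterate_le_nfp _ _ n).trans_lt hξδ
  have hstep : ∀ n, x n < d (x n) ∧ d (x n) < x (n + 1) := fun n => by
    simp only [x, Function.iterate_succ_apply', Function.comp_apply]
    exact ⟨hd _ (hxδ n), hc _ (hdδ _ (hxδ n))⟩
  have hxξ : ∀ n, x n < nfp (c ∘ d) β := fun n =>
    ((hstep n).1.trans (hstep n).2).trans_le (iterate_le_nfp _ _ (n + 1))
  have hlim : ∀ E : Set Ordinal.{0}, (∀ n, ∃ e ∈ E, x n < e ∧ e ≤ x (n + 1)) →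
      IsLimitPointOf E (nfp (c ∘ d) β) := fun E hE => by
    refine ⟨pos_of_gt (hxξ 0), fun y hy => ?_⟩
    obtain ⟨n, hn⟩ := lt_nfp_iff.1 hy
    obtain ⟨e, heE, hne, hen⟩ := hE n
    exact ⟨e, heE, hn.trans hne, hen.trans_lt (hxξ (n + 1))⟩
  have hxC : ∀ n, x (n + 1) ∈ C := fun n => by
    simp only [x, Function.iterate_succ_apply', Function.comp_apply]
    exact hcC _ (hdδ _ (hxδ n))
  refine ⟨nfp (c ∘ d) β, ⟨hC.2.2 _ hξδ (hlim C fun n => ?_), hD.2.2 _ hξδ (hlim D fun n => ?_)⟩,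
    hxξ 0⟩
  · exact ⟨x (n + 1), hxC n, (hstep n).1.trans (hstep n).2, le_rfl⟩
  · exact ⟨d (x n), hdD _ (hxδ n), (hstep n).1, (hstep n).2.le⟩

theorem IsStationaryIn.inter_isClubIn {A C : Set Ordinal.{0}} {δ : Ordinal.{0}}
    (hδ : ℵ₀ < δ.cof) (hA : IsStationaryIn A δ) (hC : IsClubIn C δ) :
    IsStationaryIn (A ∩ C) δ := fun D hD => by
  obtain ⟨x, hxA, hxC, hxD⟩ := hA _ (hC.inter hδ hD)
  exact ⟨x, ⟨hxA, hxC⟩, hxD⟩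

theorem exists_forall_lt_of_card_lt_cof {Λ ξ : Ordinal.{0}} {g : Ordinal.{0} → Ordinal.{0}}
    (hξ : ξ.card < Λ.cof) (hg : ∀ a < ξ, g a < Λ) : ∃ η < Λ, ∀ a < ξ, g a < η := by
  refine ⟨⨆ a : Iio ξ, g a + 1, lift_iSup_add_one_lt_of_lt_cof ?_ fun a => hg a a.2,
    fun a ha => (lt_add_one (g a)).trans_le ?_⟩
  · simpa [Cardinal.mk_Iio_ordinal, ← Ordinal.lift_card, ← lift_cof] using hξ
  · exact le_ciSup Ordinal.bddAbove_of_small (⟨a, ha⟩ : Iio ξ)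

theorem isClubIn_closurePoints {lam : Cardinal.{0}} (hreg : lam.IsRegular) (hlam : ℵ₀ < lam)
    {g : Ordinal.{0} → Ordinal.{0}} (hg : ∀ a < lam.ord, g a < lam.ord) :
    IsClubIn {ξ | ξ < lam.ord ∧ ∀ a < ξ, g a < ξ} lam.ord := by
  refine ⟨fun _ hξ => hξ.1, fun β hβ => ?_, fun α hα hlim => ⟨hα, fun a ha => ?_⟩⟩
  · have hbound : ∀ ξ < lam.ord, ∃ η < lam.ord, ∀ a < ξ, g a < η := fun ξ hξ =>
      exists_forall_lt_of_card_lt_cof (by rwa [hreg.cof_ord, ← lt_ord])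
        fun a ha => hg a (ha.trans hξ)
    choose! F hFlt hF using hbound
    have hΛ : Order.IsSuccLimit lam.ord := isSuccLimit_ord hreg.aleph0_le
    have hξ : nfp F (β + 1) < lam.ord :=
      nfp_lt_ord_of_isRegular hreg hlam.ne' hFlt (hΛ.add_one_lt hβ)
    refine ⟨nfp F (β + 1), ⟨hξ, fun a ha => ?_⟩, (lt_add_one β).trans_le (le_nfp _ _)⟩
    obtain ⟨n, hn⟩ := lt_nfp_iff.1 ha
    calc g a < F (F^[n] (β + 1)) := hF _ ((iterate_le_nfp _ _ n).trans_lt hξ) a hn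
      _ = F^[n + 1] (β + 1) := (Function.iterate_succ_apply' F n _).symm
      _ ≤ nfp F (β + 1) := iterate_le_nfp _ _ _
  · obtain ⟨c, hc, hac, hcα⟩ := hlim.2 a ha
    exact (hc.2 a hac).trans hcα

theorem exists_pairing_lt_ord {lam : Cardinal.{0}} (hlam : ℵ₀ ≤ lam) :
    ∃ (pair : Ordinal.{0} → Ordinal.{0} → Ordinal.{0})
      (unpair : Ordinal.{0} → Ordinal.{0} × Ordinal.{0}),
      (∀ a < lam.ord, ∀ b < lam.ord, pair a b < lam.ord ∧ unpair (pair a b) = (a, b)) ∧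
      ∀ c < lam.ord, (unpair c).1 < lam.ord ∧ (unpair c).2 < lam.ord := by
  have hmk : #(Iio lam.ord) = lift.{1} lam := by rw [Cardinal.mk_Iio_ordinal, card_ord]
  obtain ⟨e⟩ : Nonempty (Iio lam.ord × Iio lam.ord ≃ Iio lam.ord) := by
    rw [← Cardinal.eq, mk_prod, Cardinal.lift_id, hmk]
    exact mul_eq_self (by simpa using hlam)
  refine ⟨fun a b => if h : a < lam.ord ∧ b < lam.ord then e (⟨a, h.1⟩, ⟨b, h.2⟩) else 0,
    fun c => if h : c < lam.ord then ((e.symm ⟨c, h⟩).1, (e.symm ⟨c, h⟩).2) else (0, 0),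
    fun a ha b hb => ⟨?_, ?_⟩, fun c hc => ?_⟩
  · simp only [ha, hb, and_self, dite_true]
    exact (e _).2
  · simp [ha, hb, mem_Iio.1 (e _).2]
  · simp only [hc, dite_true]
    exact ⟨(e.symm _).1.2, (e.symm _).2.2⟩

theorem OSR.aleph0_lt {lam : Cardinal.{0}} {S : Set Ordinal.{0}} (hosr : OSR lam S)
    (hS : IsStationaryIn S lam.ord) : ℵ₀ < lam := by
  obtain ⟨δ, hδ, hcof, -⟩ := hosr (fun _ => S) fun _ _ => ⟨subset_rfl, hS⟩
  exact hcof.trans_le ((cof_le_card δ).trans (lt_ord.1 hδ).le)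

/-- Apply `OSR` to the traces on the club: the reflection point is a limit point of the club. -/
theorem OSR.exists_mem_isClubIn {lam : Cardinal.{0}} {S C : Set Ordinal.{0}} (hosr : OSR lam S)
    (hcof : ℵ₀ < lam.ord.cof) (hC : IsClubIn C lam.ord) {T : Ordinal.{0} → Set Ordinal.{0}}
    (hT : ∀ α < lam.ord, T α ⊆ S ∧ IsStationaryIn (T α) lam.ord) :
    ∃ δ ∈ C, ℵ₀ < δ.cof ∧ ∀ α < δ, IsStationaryIn (T α ∩ Iio δ) δ := by
  obtain ⟨δ, hδ, hδcof, hrefl⟩ := hosr (fun α => T α ∩ C) fun α hα =>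
    ⟨inter_subset_left.trans (hT α hα).1, (hT α hα).2.inter_isClubIn hcof hC⟩
  have hδlim : Order.IsSuccLimit δ := one_lt_cof_iff.1 (one_lt_aleph0.trans hδcof)
  have hδC : δ ∈ C := hC.2.2 δ hδ
    (((hrefl 0 hδlim.bot_lt).isLimitPointOf hδlim).mono fun _ hx => hx.1.2)
  exact ⟨δ, hδC, hδcof, fun α hα =>
    (hrefl α hα).mono (inter_subset_inter_left _ inter_subset_left)⟩

theorem OSR_implies_matrix_reflection_general (lam : Cardinal.{0})
    (hreg : lam.IsRegular)
    (S : Set Ordinal.{0})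
    (hSstat : IsStationaryIn S lam.ord)
    (hosr : OSR lam S) :
    ∀ (j : Ordinal.{0} → Ordinal.{0}) (T : Ordinal.{0} → Ordinal.{0} → Set Ordinal.{0}),
      (∀ α < lam.ord, (j α).card < lam) →
      (∀ α < lam.ord, ∀ i < j α, T α i ⊆ S ∧ IsStationaryIn (T α i) lam.ord) →
      ∃ γ < lam.ord, Cardinal.aleph0 < γ.cof ∧
        ∀ α < γ, ∀ i < j α, IsStationaryIn (T α i ∩ Set.Iio γ) γ := by
  intro j T hj hT
  have hlam : ℵ₀ < lam := hosr.aleph0_lt hSstat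
  obtain ⟨pair, unpair, hpair, hunpair⟩ := exists_pairing_lt_ord hlam.le
  have hrow : ∀ α < lam.ord, ∃ η < lam.ord, ∀ i < j α, pair α i < η := fun α hα =>
    exists_forall_lt_of_card_lt_cof (by rw [hreg.cof_ord]; exact hj α hα) fun i hi =>
      (hpair α hα i (hi.trans (lt_ord.2 (hj α hα)))).1
  choose! g hgΛ hg using hrow
  let U : Ordinal.{0} → Set Ordinal.{0} := fun β =>
    if (unpair β).2 < j (unpair β).1 then T (unpair β).1 (unpair β).2 else S
  have hU : ∀ β < lam.ord, U β ⊆ S ∧ IsStationaryIn (U β) lam.ord := fun β hβ => by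
    by_cases h : (unpair β).2 < j (unpair β).1
    · simpa only [U, if_pos h] using hT _ (hunpair β hβ).1 _ h
    · simpa only [U, if_neg h] using ⟨subset_rfl, hSstat⟩
  obtain ⟨δ, ⟨hδ, hδg⟩, hδcof, hrefl⟩ :=
    hosr.exists_mem_isClubIn (by rwa [hreg.cof_ord]) (isClubIn_closurePoints hreg hlam hgΛ) hU
  refine ⟨δ, hδ, hδcof, fun α hα i hi => ?_⟩
  have hαΛ : α < lam.ord := hα.trans hδ
  obtain ⟨-, hcode⟩ := hpair α hαΛ i (hi.trans (lt_ord.2 (hj α hαΛ)))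
  simpa only [U, hcode, if_pos hi] using hrefl _ ((hg α hαΛ i hi).trans (hδg α hα))

/-- For a regular cardinal `λ ≥ ℵ₂` and stationary `S ⊆ λ`, if
`OSR(S)` holds then every matrix of stationary subsets of `S` with rows of length
`< λ` reflects diagonally at some `γ < λ` of uncountable cofinality. -/
theorem OSR_implies_matrix_reflection (lam : Cardinal.{0})
    (hlam : Cardinal.aleph 2 ≤ lam) (hreg : lam.IsRegular)
    (S : Set Ordinal.{0}) (hSsub : S ⊆ Set.Iio lam.ord)
    (hSstat : IsStationaryIn S lam.ord)
    (hosr : OSR lam S) :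
    ∀ (j : Ordinal.{0} → Ordinal.{0}) (T : Ordinal.{0} → Ordinal.{0} → Set Ordinal.{0}),
      (∀ α < lam.ord, (j α).card < lam) →
      (∀ α < lam.ord, ∀ i < j α, T α i ⊆ S ∧ IsStationaryIn (T α i) lam.ord) →
      ∃ γ < lam.ord, Cardinal.aleph0 < γ.cof ∧
        ∀ α < γ, ∀ i < j α, IsStationaryIn (T α i ∩ Set.Iio γ) γ :=
  OSR_implies_matrix_reflection_general lam hreg S hSstat hosr
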